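/- Let l ≥ 2 be even, let 𝔤 ≥ 1, n_s ≥ 0, n_v ≥ 0, and assume 3 ∣ l whenever n_v > 0. Let G be the group with presentation ⟨x₁, …, x_{n_s}, y₁, …, y_{n_v}, z, d₁, …, d_{𝔤} | x_i² = 1 (1 ≤ i ≤ n_s), y_j³ = 1 (1 ≤ j ≤ n_v), z^l = 1, x₁⋯x_{n_s}·y₁⋯y_{n_v}·z·d₁²⋯d_{𝔤}² = 1⟩. Then the number of surjective group homomorphisms φ from G to the cyclic group Z/lZ such that φ(x_i) has order exactly 2 for every i, φ(y_j) has order exactly 3 for every j, and φ(z) has order exactly l, equals 2 · l^{𝔤−1} · φ_E(l) · 2^{n_v} if (l/2)·n_s + (l/3)·n_v + 1 is even (where the term (l/3)·n_v is 0 when n_v = 0), and equals 0 otherwise; here φ_E is Euler's totient function. -/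

import Mathlib

/-! Since `ZMod l` is abelian, a homomorphism is the same as values `(x, y, z, d)` on the
generators with `∑ xᵢ + ∑ yⱼ + z + 2 ∑ dₖ = 0`, and it is onto as soon as `z` has order `l`.
The order conditions force `xᵢ = l/2` and leave `totient 3 = 2` choices for each `yⱼ` and
`totient l` for `z`. For `c = ∑ xᵢ + ∑ yⱼ + z`, the equation `c + 2s = 0` has two solutions
(differing by `l/2`) if `c` is even and none if `c` is odd; `d` is determined by `s = ∑ dₖ` and
`d₂, …, d_gg`. Modulo 2, `xᵢ ≡ l/2`, `yⱼ ≡ 0` (odd order) and `z ≡ 1` (a generator), so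
`c ≡ (l/2)·ns + 1`. -/

/-- Generators of the fundamental group of a closed non-orientable orbifold of
genus `gg` with signature `(gg; [2,…,2 (ns times), 3,…,3 (nv times), l])`: the
index-2 branch-point generators `x₁, …, x_{ns}` (`Sum.inl`), the index-3
branch-point generators `y₁, …, y_{nv}` (`Sum.inr (Sum.inl _)`), the generator `z`
of the face branch point (`Sum.inr (Sum.inr (Sum.inl ()))`), and the crosscap
generators `d₁, …, d_{gg}` (`Sum.inr (Sum.inr (Sum.inr _))`). -/
abbrev OrbGen (ns nv gg : ℕ) := Sum (Fin ns) (Sum (Fin nv) (Sum Unit (Fin gg)))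

/-- The relations `x_i² = 1`, `y_j³ = 1`, `z^l = 1`,
`x₁ ⋯ x_{ns} · y₁ ⋯ y_{nv} · z · d₁² ⋯ d_{gg}² = 1`. -/
def orbRels (ns nv gg l : ℕ) : Set (FreeGroup (OrbGen ns nv gg)) :=
  (Set.range fun i : Fin ns => (FreeGroup.of (Sum.inl i : OrbGen ns nv gg)) ^ 2) ∪
  (Set.range fun j : Fin nv =>
    (FreeGroup.of (Sum.inr (Sum.inl j) : OrbGen ns nv gg)) ^ 3) ∪
  {(FreeGroup.of (Sum.inr (Sum.inr (Sum.inl ())) : OrbGen ns nv gg)) ^ l} ∪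
  {(List.ofFn fun i : Fin ns => FreeGroup.of (Sum.inl i : OrbGen ns nv gg)).prod *
    (List.ofFn fun j : Fin nv =>
      FreeGroup.of (Sum.inr (Sum.inl j) : OrbGen ns nv gg)).prod *
    FreeGroup.of (Sum.inr (Sum.inr (Sum.inl ())) : OrbGen ns nv gg) *
    (List.ofFn fun i : Fin gg =>
      (FreeGroup.of (Sum.inr (Sum.inr (Sum.inr i)) : OrbGen ns nv gg)) ^ 2).prod}

theorem Nat.card_fun_fin_succ_subtype_sum {M : Type*} [AddCommGroup M] (k : ℕ) (p : M → Prop) :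
    Nat.card {d : Fin (k + 1) → M // p (∑ i, d i)} = Nat.card {s // p s} * Nat.card M ^ k := by
  let e : {d : Fin (k + 1) → M // p (∑ i, d i)} ≃ {s // p s} × (Fin k → M) :=
    { toFun := fun d => (⟨∑ i, d.1 i, d.2⟩, Fin.tail d.1)
      invFun := fun st => ⟨Fin.cons (st.1.1 - ∑ i, st.2 i) st.2, by
        simpa [Fin.sum_univ_succ] using st.1.2⟩
      left_inv := fun d => Subtype.ext <| by
        simp [Fin.sum_univ_succ, Fin.tail, Fin.cons_self_tail]
      right_inv := fun st => by simp [Fin.sum_univ_succ] }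
  rw [Nat.card_congr e, Nat.card_prod, Nat.card_fun, Nat.card_fin]

theorem Nat.card_subtype_prod_of_card_fiber {α β : Type*} [Finite α] [Finite β] (P : α → Prop)
    (R : α → β → Prop) {C : ℕ} (h : ∀ a, P a → Nat.card {b // R a b} = C) :
    Nat.card {q : α × β // P q.1 ∧ R q.1 q.2} = Nat.card {a // P a} * C := by
  have := Fintype.ofFinite α
  classical
  let e : {q : α × β // P q.1 ∧ R q.1 q.2} ≃ Σ a : {a // P a}, {b // R a b} :=
    { toFun := fun q => ⟨⟨q.1.1, q.2.1⟩, ⟨q.1.2, q.2.2⟩⟩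
      invFun := fun q => ⟨(q.1.1, q.2.1), q.1.2, q.2.2⟩
      left_inv := fun _ => rfl
      right_inv := fun _ => rfl }
  rw [Nat.card_congr e, Nat.card_sigma, Finset.sum_congr rfl fun a _ => h a.1 a.2,
    Finset.sum_const, Finset.card_univ, smul_eq_mul, Nat.card_eq_fintype_card]

namespace ZMod

variable {l : ℕ}

theorem two_mul_eq_zero_iff [NeZero l] (h2 : 2 ∣ l) (s : ZMod l) :
    2 * s = 0 ↔ s = 0 ∨ s = ((l / 2 : ℕ) : ZMod l) := by
  have hval : ((l / 2 : ℕ) : ZMod l).val = l / 2 :=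
    val_natCast_of_lt (Nat.div_lt_self (Nat.pos_of_neZero l) one_lt_two)
  rw [two_mul, add_eq_zero_iff_neg_eq, neg_eq_self_iff]
  refine or_congr_right ⟨fun h => ?_, fun h => ?_⟩
  · rw [← natCast_zmod_val s]; congr 1; omega
  · rw [h, hval]; omega

theorem exists_eq_two_mul_of_castHom_eq_zero [NeZero l] (h2 : 2 ∣ l) {c : ZMod l}
    (hc : castHom h2 (ZMod 2) c = 0) : ∃ a, c = 2 * a := by
  rw [← natCast_zmod_val c, map_natCast, natCast_eq_zero_iff_even] at hc
  obtain ⟨w, hw⟩ := hc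
  exact ⟨w, by rw [← natCast_zmod_val c, hw, Nat.cast_add, two_mul]⟩

theorem card_add_two_mul_eq_zero [NeZero l] (h2 : 2 ∣ l) (c : ZMod l) :
    Nat.card {s : ZMod l // c + 2 * s = 0} = if castHom h2 (ZMod 2) c = 0 then 2 else 0 := by
  split_ifs with hc
  · obtain ⟨a, rfl⟩ := exists_eq_two_mul_of_castHom_eq_zero h2 hc
    set u : ZMod l := ((l / 2 : ℕ) : ZMod l)
    have hu : u ≠ 0 := by
      have hl := NeZero.ne l
      rw [Ne, natCast_eq_zero_iff]
      intro h
      have := Nat.eq_zero_of_dvd_of_lt h (Nat.div_lt_self (by omega) one_lt_two)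
      omega
    calc Nat.card {s : ZMod l // 2 * a + 2 * s = 0}
        = Nat.card ({-a, -a + u} : Set (ZMod l)) := Nat.card_congr <|
          Equiv.subtypeEquivRight fun s => by
            rw [← mul_add, two_mul_eq_zero_iff h2]
            simp only [Set.mem_insert_iff, Set.mem_singleton_iff]
            constructor <;> rintro (h | h) <;> [left; right; left; right] <;>
              linear_combination h
      _ = 2 := by rw [Nat.card_coe_set_eq, Set.ncard_pair (by simpa using hu)]
  · have : IsEmpty {s : ZMod l // c + 2 * s = 0} := ⟨fun ⟨s, hs⟩ => hc <| by
      have := congrArg (castHom h2 (ZMod 2)) hs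
      rwa [map_add, map_mul, map_ofNat, show (2 : ZMod 2) = 0 from rfl, zero_mul, add_zero,
        map_zero] at this⟩
    exact Nat.card_of_isEmpty

theorem castHom_eq_zero_of_nsmul_eq_zero (h2 : 2 ∣ l) {n : ℕ} (hn : Odd n) {y : ZMod l}
    (hy : n • y = 0) : castHom h2 (ZMod 2) y = 0 := by
  have := congrArg (castHom h2 (ZMod 2)) hy
  rwa [map_nsmul, map_zero, nsmul_eq_mul, natCast_eq_one_iff_odd.mpr hn, one_mul] at this

theorem castHom_eq_one_of_addOrderOf_eq [NeZero l] (h2 : 2 ∣ l) {z : ZMod l}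
    (hz : addOrderOf z = l) : castHom h2 (ZMod 2) z = 1 := by
  rw [← natCast_zmod_val z, addOrderOf_coe _ (NeZero.ne l), Nat.div_eq_self] at hz
  rw [← natCast_zmod_val z, map_natCast, natCast_eq_one_iff_odd,
    ← Nat.coprime_two_left]
  exact Nat.Coprime.coprime_dvd_left h2 (hz.resolve_left (NeZero.ne l))

theorem eq_half_of_addOrderOf_eq_two [NeZero l] (h2 : 2 ∣ l) {x : ZMod l}
    (hx : addOrderOf x = 2) : x = ((l / 2 : ℕ) : ZMod l) := by
  have h0 := addOrderOf_nsmul_eq_zero x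
  rw [hx, two_nsmul, ← two_mul] at h0
  refine ((two_mul_eq_zero_iff h2 x).1 h0).resolve_left fun h => ?_
  simp [h] at hx

theorem card_addOrderOf_eq_totient [NeZero l] {d : ℕ} (hd : d ∣ l) :
    Nat.card {a : ZMod l // addOrderOf a = d} = d.totient := by
  rw [Nat.card_eq_fintype_card, Fintype.card_subtype]
  exact IsAddCyclic.card_addOrderOf_eq_totient (by simpa using hd)

theorem card_add_two_mul_sum_eq_zero [NeZero l] (h2 : 2 ∣ l) (k : ℕ) (c : ZMod l) :
    Nat.card {d : Fin (k + 1) → ZMod l // c + 2 * ∑ i, d i = 0} =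
      (if castHom h2 (ZMod 2) c = 0 then 2 else 0) * l ^ k := by
  rw [Nat.card_fun_fin_succ_subtype_sum k fun s => c + 2 * s = 0, card_add_two_mul_eq_zero h2,
    Nat.card_zmod]

end ZMod

theorem MonoidHom.surjective_of_orderOf_eq_card {G H : Type*} [Group G] [Group H] [Finite H]
    (φ : G →* H) {g : G} (hg : orderOf (φ g) = Nat.card H) : Function.Surjective φ := by
  have htop : Subgroup.zpowers (φ g) = ⊤ :=
    Subgroup.eq_top_of_card_eq _ (by rw [Nat.card_zpowers, hg])
  intro h
  obtain ⟨n, hn⟩ := Subgroup.mem_zpowers_iff.mp (htop ▸ Subgroup.mem_top h)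
  exact ⟨g ^ n, by rw [map_zpow, hn]⟩

namespace PresentedGroup

def homEquiv {α G : Type*} [Group G] (rels : Set (FreeGroup α)) :
    (PresentedGroup rels →* G) ≃ {f : α → G // ∀ r ∈ rels, FreeGroup.lift f r = 1} where
  toFun φ := ⟨fun a => φ (of a), fun r hr => by
    rw [show FreeGroup.lift (fun a => φ (of a)) = φ.comp (mk rels) from
      FreeGroup.ext_hom _ _ fun _ => FreeGroup.lift_apply_of, MonoidHom.comp_apply,
      one_of_mem hr, map_one]⟩
  invFun f := toGroup f.2
  left_inv φ := ext fun _ => toGroup.of _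
  right_inv f := Subtype.ext <| funext fun _ => toGroup.of _

end PresentedGroup

def orbTupleEquiv (ns nv gg l : ℕ) : (OrbGen ns nv gg → Multiplicative (ZMod l)) ≃
    ((Fin ns → ZMod l) × (Fin nv → ZMod l) × ZMod l) × (Fin gg → ZMod l) where
  toFun f := ((fun i => (f (.inl i)).toAdd, fun j => (f (.inr (.inl j))).toAdd,
    (f (.inr (.inr (.inl ())))).toAdd), fun i => (f (.inr (.inr (.inr i)))).toAdd)
  invFun q :=
    Multiplicative.ofAdd ∘ Sum.elim q.1.1 (Sum.elim q.1.2.1 (Sum.elim (fun _ => q.1.2.2) q.2))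
  left_inv _ := funext fun
    | .inl _ | .inr (.inl _) | .inr (.inr (.inl ())) | .inr (.inr (.inr _)) => rfl
  right_inv _ := rfl

abbrev HasBranchOrders {ns nv : ℕ} (l : ℕ) (t : (Fin ns → ZMod l) × (Fin nv → ZMod l) × ZMod l) :
    Prop :=
  (∀ i, addOrderOf (t.1 i) = 2) ∧ (∀ j, addOrderOf (t.2.1 j) = 3) ∧ addOrderOf t.2.2 = l

section Orbifold

variable {ns nv gg l : ℕ}

theorem forall_mem_orbRels_lift_eq_one_iff {G : Type*} [CommGroup G] (f : OrbGen ns nv gg → G) :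
    (∀ r ∈ orbRels ns nv gg l, FreeGroup.lift f r = 1) ↔
      (∀ i, f (.inl i) ^ 2 = 1) ∧ (∀ j, f (.inr (.inl j)) ^ 3 = 1) ∧
      f (.inr (.inr (.inl ()))) ^ l = 1 ∧
      (∏ i, f (.inl i)) * (∏ j, f (.inr (.inl j))) * f (.inr (.inr (.inl ()))) *
        ∏ i, f (.inr (.inr (.inr i))) ^ 2 = 1 := by
  simp only [orbRels, Set.union_singleton, Set.mem_insert_iff, Set.mem_union, Set.mem_range, or_imp,
    forall_exists_index, forall_and, forall_eq, map_mul, map_list_prod, List.map_ofFn,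
    Function.comp_def, FreeGroup.lift_apply_of, List.prod_ofFn, map_pow, forall_apply_eq_imp_iff]
  tauto

theorem card_order_preserving_epi_eq_card_tuples [NeZero l] :
    Nat.card {φ : PresentedGroup (orbRels ns nv gg l) →* Multiplicative (ZMod l) //
      Function.Surjective φ ∧
      (∀ i : Fin ns, orderOf (φ (PresentedGroup.of (Sum.inl i))) = 2) ∧
      (∀ j : Fin nv, orderOf (φ (PresentedGroup.of (Sum.inr (Sum.inl j)))) = 3) ∧
      orderOf (φ (PresentedGroup.of (Sum.inr (Sum.inr (Sum.inl ()))))) = l} =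
    Nat.card {q : ((Fin ns → ZMod l) × (Fin nv → ZMod l) × ZMod l) × (Fin gg → ZMod l) //
      HasBranchOrders l q.1 ∧
      ∑ i, q.1.1 i + ∑ j, q.1.2.1 j + q.1.2.2 + 2 * ∑ i, q.2 i = 0} := by
  refine Nat.card_congr <| ((PresentedGroup.homEquiv _).subtypeEquiv fun φ => ?_).trans <|
    (Equiv.subtypeSubtypeEquivSubtypeInter _ fun f : OrbGen ns nv gg → Multiplicative (ZMod l) =>
      (∀ i, orderOf (f (.inl i)) = 2) ∧ (∀ j, orderOf (f (.inr (.inl j))) = 3) ∧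
        orderOf (f (.inr (.inr (.inl ())))) = l).trans <| (orbTupleEquiv ns nv gg l).subtypeEquiv
    fun f => ?_
  · refine ⟨fun h => h.2, fun h => ⟨φ.surjective_of_orderOf_eq_card (h.2.2.trans ?_), h⟩⟩
    rw [Nat.card_congr Multiplicative.toAdd, Nat.card_zmod]
  · have htoAdd :
        ((∏ i, f (.inl i)) * (∏ j, f (.inr (.inl j))) * f (.inr (.inr (.inl ()))) *
          ∏ i, f (.inr (.inr (.inr i))) ^ 2).toAdd =
        ∑ i, (f (.inl i)).toAdd + ∑ j, (f (.inr (.inl j))).toAdd +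
          (f (.inr (.inr (.inl ())))).toAdd + 2 * ∑ i, (f (.inr (.inr (.inr i)))).toAdd := by
      simp [Finset.mul_sum]
    rw [forall_mem_orbRels_lift_eq_one_iff]
    constructor
    · rintro ⟨⟨-, -, -, hrel⟩, hord⟩
      exact ⟨hord, htoAdd.symm.trans (congrArg Multiplicative.toAdd hrel)⟩
    · rintro ⟨⟨hx, hy, hz⟩, hrel⟩
      have hpow {a : Multiplicative (ZMod l)} {n : ℕ} (h : addOrderOf a.toAdd = n) : a ^ n = 1 := by
        rw [← h]
        exact pow_orderOf_eq_one a
      exact ⟨⟨fun i => hpow (hx i), fun j => hpow (hy j), hpow hz,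
        Multiplicative.toAdd.injective (htoAdd.trans hrel)⟩, hx, hy, hz⟩

theorem card_branch_tuples_eq [NeZero l] (h2 : 2 ∣ l) (h3 : 0 < nv → 3 ∣ l) :
    Nat.card {t : (Fin ns → ZMod l) × (Fin nv → ZMod l) × ZMod l // HasBranchOrders l t} =
      2 ^ nv * l.totient := by
  let e : {t : (Fin ns → ZMod l) × (Fin nv → ZMod l) × ZMod l // HasBranchOrders l t} ≃
      (Fin ns → {a : ZMod l // addOrderOf a = 2}) × (Fin nv → {a : ZMod l // addOrderOf a = 3}) ×
        {a : ZMod l // addOrderOf a = l} :=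
    { toFun t := (fun i => ⟨t.1.1 i, t.2.1 i⟩, fun j => ⟨t.1.2.1 j, t.2.2.1 j⟩, ⟨t.1.2.2, t.2.2.2⟩)
      invFun u := ⟨(fun i => u.1 i, fun j => u.2.1 j, u.2.2), fun i => (u.1 i).2,
        fun j => (u.2.1 j).2, u.2.2.2⟩
      left_inv _ := rfl
      right_inv _ := rfl }
  rw [Nat.card_congr e, Nat.card_prod, Nat.card_prod, Nat.card_fun, Nat.card_fun,
    ZMod.card_addOrderOf_eq_totient h2, ZMod.card_addOrderOf_eq_totient dvd_rfl]
  rcases nv.eq_zero_or_pos with rfl | hnv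
  · simp
  · rw [ZMod.card_addOrderOf_eq_totient (h3 hnv), Nat.totient_prime Nat.prime_three]
    simp

theorem castHom_branch_sum_eq [NeZero l] (h2 : 2 ∣ l)
    (t : (Fin ns → ZMod l) × (Fin nv → ZMod l) × ZMod l)
    (ht : HasBranchOrders l t) :
    ZMod.castHom h2 (ZMod 2) (∑ i, t.1 i + ∑ j, t.2.1 j + t.2.2) =
      ((l / 2 * ns + 1 : ℕ) : ZMod 2) := by
  obtain ⟨hx, hy, hz⟩ := ht
  have hx2 i : ZMod.castHom h2 (ZMod 2) (t.1 i) = ((l / 2 : ℕ) : ZMod 2) := by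
    rw [ZMod.eq_half_of_addOrderOf_eq_two h2 (hx i), map_natCast]
  have hy0 j : ZMod.castHom h2 (ZMod 2) (t.2.1 j) = 0 :=
    ZMod.castHom_eq_zero_of_nsmul_eq_zero h2 (by decide) (hy j ▸ addOrderOf_nsmul_eq_zero _)
  rw [map_add, map_add, map_sum, map_sum, ZMod.castHom_eq_one_of_addOrderOf_eq h2 hz]
  simp [hx2, hy0, mul_comm]

theorem even_half_mul_add_third_mul_add_one_iff (h2 : 2 ∣ l) (h3 : 0 < nv → 3 ∣ l) :
    Even (l / 2 * ns + l / 3 * nv + 1) ↔ Even (l / 2 * ns + 1) := by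
  rcases nv.eq_zero_or_pos with rfl | hnv
  · simp
  · have : Even (l / 3) := Nat.even_iff.mpr (by have := h3 hnv; omega)
    rw [add_right_comm, Nat.even_add, iff_true_right (this.mul_right nv)]

end Orbifold

/-- for even `l ≥ 2`, `gg ≥ 1`, `ns, nv ≥ 0` with `3 ∣ l` whenever
`nv > 0`, the number of order-preserving epimorphisms from the fundamental group of
the non-orientable orbifold with signature `(gg; [2,…,2 (ns times), 3,…,3 (nv times), l])`
onto `Z/lZ` equals `2 · l^(gg-1) · φ(l) · 2^nv` if `(l/2)·ns + (l/3)·nv + 1` is even,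
and `0` otherwise. -/
theorem count_order_preserving_epi_even_period
    (l gg ns nv : ℕ) (hl : 2 ≤ l) (heven : Even l) (hgg : 1 ≤ gg)
    (hdvd : 0 < nv → 3 ∣ l) :
    Nat.card {φ : PresentedGroup (orbRels ns nv gg l) →* Multiplicative (ZMod l) //
      Function.Surjective φ ∧
      (∀ i : Fin ns, orderOf (φ (PresentedGroup.of (Sum.inl i))) = 2) ∧
      (∀ j : Fin nv, orderOf (φ (PresentedGroup.of (Sum.inr (Sum.inl j)))) = 3) ∧
      orderOf (φ (PresentedGroup.of (Sum.inr (Sum.inr (Sum.inl ()))))) = l} =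
    if Even (l / 2 * ns + l / 3 * nv + 1) then
      2 * l ^ (gg - 1) * Nat.totient l * 2 ^ nv
    else 0 := by
  have : NeZero l := ⟨by omega⟩
  have h2 : 2 ∣ l := even_iff_two_dvd.mp heven
  obtain ⟨k, rfl⟩ : ∃ k, gg = k + 1 := ⟨gg - 1, by omega⟩
  have hfiber (t : (Fin ns → ZMod l) × (Fin nv → ZMod l) × ZMod l)
      (ht : HasBranchOrders l t) :
      Nat.card {d : Fin (k + 1) → ZMod l // ∑ i, t.1 i + ∑ j, t.2.1 j + t.2.2 + 2 * ∑ i, d i = 0} =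
        (if Even (l / 2 * ns + l / 3 * nv + 1) then 2 else 0) * l ^ k := by
    simp only [ZMod.card_add_two_mul_sum_eq_zero h2, castHom_branch_sum_eq h2 t ht,
      ZMod.natCast_eq_zero_iff_even, even_half_mul_add_third_mul_add_one_iff h2 hdvd]
  rw [card_order_preserving_epi_eq_card_tuples, Nat.card_subtype_prod_of_card_fiber _ _ hfiber,
    card_branch_tuples_eq h2 hdvd, Nat.add_sub_cancel]
  split_ifs <;> ring
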